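/- arXiv:1811.00245 — 11 statements merged into one kernel-verified Lean document; each statement's English description precedes it below -/
import Mathlib

section
/- Let n be even, n ≥ 2, and let P_n be the path with vertices v_1, …, v_n in order, with the 2-colouring ζ(v_i) = 1 if i is odd and ζ(v_i) = 2 if i is even. Then the chromatic Schultz polynomial Σ_{{u,v}} (ζ(u)+ζ(v))x^{d(u,v)} (unordered pairs, diagonal pair {v,v} contributing 2ζ(v)x^0) equals 3·Σ_{i=0}^{n−1} (n − i)·x^i. -/
open Polynomial Finset

private def f (i : ℕ) : ℚ := if i % 2 = 0 then 1 else 2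

private lemma sum_f_even (k d : ℕ) :
    ∑ i ∈ Finset.range (2 * k), (f i + f (i + d)) = 3 * ((2 * k : ℕ) : ℚ) := by
  induction k with
  | zero => simp
  | succ k ih =>
      have h1 : 2 * (k + 1) = (2 * k) + 1 + 1 := by ring
      rw [h1, Finset.sum_range_succ, Finset.sum_range_succ, ih]
      unfold f
      have e1 : (2 * k) % 2 = 0 := by omega
      have e2 : (2 * k + 1) % 2 = 1 := by omega
      rcases Nat.mod_two_eq_zero_or_one d with hd | hd
      · have e3 : (2 * k + d) % 2 = 0 := by omega
        have e4 : (2 * k + 1 + d) % 2 = 1 := by omega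
        rw [e1, e2, e3, e4]
        push_cast; norm_num; ring
      · have e3 : (2 * k + d) % 2 = 1 := by omega
        have e4 : (2 * k + 1 + d) % 2 = 0 := by omega
        rw [e1, e2, e3, e4]
        push_cast; norm_num; ring

private lemma sum_f_odd (m d : ℕ) (hd : d % 2 = 1) :
    ∑ i ∈ Finset.range m, (f i + f (i + d)) = 3 * (m : ℚ) := by
  have h : ∀ i ∈ Finset.range m, f i + f (i + d) = 3 := by
    intro i _
    unfold f
    rcases Nat.mod_two_eq_zero_or_one i with hi | hi <;>
      [ (have : (i + d) % 2 = 1 := by omega );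
        (have : (i + d) % 2 = 0 := by omega) ] <;>
      rw [hi, this] <;> norm_num
  rw [Finset.sum_congr rfl h, Finset.sum_const, Finset.card_range]
  ring

private lemma sum_f_key (n d : ℕ) (hn : Even n) :
    ∑ i ∈ Finset.range (n - d), (f i + f (i + d)) = 3 * ((n - d : ℕ) : ℚ) := by
  rcases Nat.mod_two_eq_zero_or_one d with hd | hd
  · obtain ⟨k, hk⟩ : ∃ k, n - d = 2 * k := by
      obtain ⟨t, ht⟩ := hn; exact ⟨(n - d) / 2, by omega⟩
    rw [hk]; exact sum_f_even k d
  · exact sum_f_odd (n - d) d hd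

private lemma tri (n : ℕ) (h : ℕ → ℕ → Polynomial ℚ) :
    ∑ i ∈ Finset.range n, ∑ d ∈ Finset.range (n - i), h i d
      = ∑ d ∈ Finset.range n, ∑ i ∈ Finset.range (n - d), h i d := by
  rw [Finset.sum_sigma', Finset.sum_sigma']
  apply Finset.sum_nbij' (fun p => ⟨p.2, p.1⟩) (fun p => ⟨p.2, p.1⟩) <;>
    simp <;> omega

/-- chromatic Schultz polynomial of the path `P n`, `n` even.
Vertex index `i` (0-based) stands for `v_{i+1}`, so `v_{i+1}` has label 1 iff
`i` is even; `d(v_{i+1}, v_{j+1}) = j - i` for `i ≤ j`. -/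
theorem chromatic_schultz_path_even (n : ℕ) (hn : 2 ≤ n) (hpar : Even n) :
    (∑ i ∈ Finset.range n, ∑ j ∈ Finset.range n,
      if i ≤ j then
        C ((if i % 2 = 0 then (1 : ℚ) else 2) + (if j % 2 = 0 then (1 : ℚ) else 2)) *
          X ^ (j - i)
      else 0) =
    3 * ∑ i ∈ Finset.range n, C ((n : ℚ) - i) * X ^ i := by
  have step1 : ∀ i ∈ Finset.range n,
      (∑ j ∈ Finset.range n,
        if i ≤ j then C (f i + f j) * X ^ (j - i) else 0)
        = ∑ d ∈ Finset.range (n - i), C (f i + f (i + d)) * X ^ d := by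
    intro i hi
    rw [← Finset.sum_filter]
    have hfil : (Finset.range n).filter (fun j => i ≤ j) = Finset.Ico i n := by
      ext j; simp; omega
    rw [hfil, Finset.sum_Ico_eq_sum_range]
    apply Finset.sum_congr rfl
    intro d _
    have h2 : i + d - i = d := by omega
    rw [h2]
  calc (∑ i ∈ Finset.range n, ∑ j ∈ Finset.range n,
      if i ≤ j then
        C ((if i % 2 = 0 then (1 : ℚ) else 2) + (if j % 2 = 0 then (1 : ℚ) else 2)) *
          X ^ (j - i)
      else 0)
      = ∑ i ∈ Finset.range n, ∑ d ∈ Finset.range (n - i),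
          C (f i + f (i + d)) * X ^ d := Finset.sum_congr rfl step1
    _ = ∑ d ∈ Finset.range n, ∑ i ∈ Finset.range (n - d),
          C (f i + f (i + d)) * X ^ d := tri n _
    _ = ∑ d ∈ Finset.range n, C ((3 : ℚ) * ((n : ℚ) - d)) * X ^ d := by
        apply Finset.sum_congr rfl
        intro d hd
        rw [← Finset.sum_mul, ← map_sum, sum_f_key n d hpar]
        have hdn : d ≤ n := le_of_lt (Finset.mem_range.mp hd)
        congr 2
        push_cast [hdn]
        ring
    _ = 3 * ∑ i ∈ Finset.range n, C ((n : ℚ) - i) * X ^ i := by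
        rw [Finset.mul_sum]
        apply Finset.sum_congr rfl
        intro d _
        rw [C_mul]
        have h3 : C (3 : ℚ) = (3 : Polynomial ℚ) := by
          exact map_ofNat C 3
        rw [h3]
        ring
end

section
/- Let n be odd, n ≥ 1, and let P_n be the path with vertices v_1, …, v_n in order, with the 2-colouring ζ(v_i) = 1 if i is odd and ζ(v_i) = 2 if i is even. Then the chromatic Schultz polynomial Σ_{{u,v}} (ζ(u)+ζ(v))x^{d(u,v)} (unordered pairs, diagonal contributing 2ζ(v)) equals Σ_{i=0}^{(n−1)/2} [(3n − 6i − 3)x + (3n − 6i − 1)]·x^{2i}. -/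
open Polynomial Finset

private def zc (i : ℕ) : ℚ := if i % 2 = 0 then 1 else 2

private lemma sum_range_two_mul (k : ℕ) (f : ℕ → ℚ[X]) :
    ∑ d ∈ Finset.range (2*k), f d = ∑ i ∈ Finset.range k, (f (2*i) + f (2*i+1)) := by
  induction k with
  | zero => simp
  | succ k ih =>
    rw [show 2*(k+1) = (2*k+1)+1 by ring, Finset.sum_range_succ, Finset.sum_range_succ,
      ih, Finset.sum_range_succ]
    ring

private lemma term_step (a b : ℚ) (i : ℕ) :
    (C a * X + C b) * X^(2*i) + (C 6 * X^(2*i) + C 6 * X^(2*i+1)) =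
      (C (a+6) * X + C (b+6)) * X^(2*i) := by
  rw [C_add, C_add]; ring

private lemma key (m : ℕ) :
    (∑ i ∈ Finset.range (2*m+1), ∑ j ∈ Finset.range (2*m+1),
      if i ≤ j then C (zc i + zc j) * X ^ (j - i) else 0) =
    ∑ i ∈ Finset.range (m+1),
      (C (6*(m:ℚ) - 6*i) * X + C (6*(m:ℚ) - 6*i + 2)) * X ^ (2*i) := by
  induction m with
  | zero =>
    simp [zc]
    norm_num
    exact (map_ofNat C 2).symm
  | succ m ih =>
    have e1 : 2*(m+1)+1 = (2*m+1)+1+1 := by ring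
    set n := 2*m+1 with hn
    rw [e1]
    have hsplit : ∀ i ∈ Finset.range (n+1+1),
        (∑ j ∈ Finset.range (n+1+1), if i ≤ j then C (zc i + zc j)*X^(j-i) else 0)
        = (∑ j ∈ Finset.range n, if i ≤ j then C (zc i + zc j)*X^(j-i) else 0)
          + ((if i ≤ n then C (zc i + zc n)*X^(n-i) else 0)
          + (if i ≤ n+1 then C (zc i + zc (n+1))*X^(n+1-i) else 0)) := by
      intro i _
      rw [Finset.sum_range_succ, Finset.sum_range_succ, add_assoc]
    rw [Finset.sum_congr rfl hsplit, Finset.sum_add_distrib, Finset.sum_add_distrib]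
    have hA : (∑ i ∈ Finset.range (n+1+1), ∑ j ∈ Finset.range n,
          if i ≤ j then C (zc i + zc j)*X^(j-i) else 0)
        = ∑ i ∈ Finset.range n, ∑ j ∈ Finset.range n,
          if i ≤ j then C (zc i + zc j)*X^(j-i) else 0 := by
      rw [Finset.sum_range_succ, Finset.sum_range_succ]
      have hz : ∀ k : ℕ, n ≤ k →
          (∑ j ∈ Finset.range n, if k ≤ j then C (zc k + zc j)*X^(j-k) else 0) = 0 := by
        intro k hk
        refine Finset.sum_eq_zero fun j hj => ?_
        rw [Finset.mem_range] at hj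
        rw [if_neg (by omega)]
      rw [hz n le_rfl, hz (n+1) (by omega)]
      ring
    rw [hA, ih]
    have hB : (∑ i ∈ Finset.range (n+1+1), if i ≤ n then C (zc i + zc n)*X^(n-i) else 0)
        = ∑ i ∈ Finset.range (n+1), C (zc i + 2)*X^(n-i) := by
      rw [Finset.sum_range_succ, if_neg (by omega), add_zero]
      refine Finset.sum_congr rfl fun i hi => ?_
      rw [Finset.mem_range] at hi
      rw [if_pos (by omega)]
      have h2 : zc n = 2 := by simp only [zc]; rw [if_neg (by omega)]
      rw [h2]
    have hC : (∑ i ∈ Finset.range (n+1+1), if i ≤ n+1 then C (zc i + zc (n+1))*X^(n+1-i) else 0)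
        = (∑ i ∈ Finset.range (n+1), C (zc (i+1) + 1)*X^(n-i)) + C 2 * X^(n+1) := by
      rw [Finset.sum_range_succ']
      have hz1 : zc (n+1) = 1 := by simp only [zc]; rw [if_pos (by omega)]
      congr 1
      · refine Finset.sum_congr rfl fun i hi => ?_
        rw [Finset.mem_range] at hi
        rw [if_pos (by omega), hz1]
        have he : n+1-(i+1) = n-i := by omega
        rw [he]
      · rw [if_pos (by omega), hz1]
        have h0 : zc 0 = 1 := by simp [zc]
        rw [h0]
        norm_num
    rw [hB, hC]
    have hBC : (∑ i ∈ Finset.range (n+1), C (zc i + 2)*X^(n-i))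
        + (∑ i ∈ Finset.range (n+1), C (zc (i+1) + 1)*X^(n-i))
        = ∑ i ∈ Finset.range (n+1), C 6 * X^(n-i) := by
      rw [← Finset.sum_add_distrib]
      refine Finset.sum_congr rfl fun i _ => ?_
      have h6 : C (zc i + 2) + C (zc (i+1) + 1) = C 6 := by
        rw [← C_add]
        congr 1
        simp only [zc]
        rcases Nat.mod_two_eq_zero_or_one i with h | h
        · rw [if_pos h, if_neg (by omega)]; norm_num
        · rw [if_neg (by omega), if_pos (by omega)]; norm_num
      rw [← h6]; ring
    have hrefl : (∑ i ∈ Finset.range (n+1), C (6:ℚ) * X^(n-i))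
        = ∑ d ∈ Finset.range (n+1), C 6 * X^d := by
      rw [← Finset.sum_range_reflect (fun d => C (6:ℚ) * X^d) (n+1)]
      refine Finset.sum_congr rfl fun i hi => ?_
      rw [Finset.mem_range] at hi
      have he : n + 1 - 1 - i = n - i := by omega
      rw [he]
    rw [← add_assoc
      (∑ i ∈ Finset.range (n+1), C (zc i + 2)*X^(n-i))
      (∑ i ∈ Finset.range (n+1), C (zc (i+1) + 1)*X^(n-i))
      (C 2 * X^(n+1)), hBC, hrefl]
    rw [show n+1 = 2*(m+1) by omega, sum_range_two_mul (m+1) (fun d => C (6:ℚ) * X^d)]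
    rw [Finset.sum_range_succ
      (fun i => (C (6*((m+1:ℕ):ℚ) - 6*i) * X + C (6*((m+1:ℕ):ℚ) - 6*i + 2)) * X ^ (2*i))]
    have hlast : (C (6*((m+1:ℕ):ℚ) - 6*((m+1:ℕ):ℚ)) * X
        + C (6*((m+1:ℕ):ℚ) - 6*((m+1:ℕ):ℚ) + 2)) * X ^ (2*(m+1)) = C 2 * X^(2*(m+1)) := by
      norm_num
    have hmain : (∑ i ∈ Finset.range (m+1),
          (C (6*(m:ℚ) - 6*i) * X + C (6*(m:ℚ) - 6*i + 2)) * X ^ (2*i))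
        + (∑ i ∈ Finset.range (m+1), (C (6:ℚ) * X^(2*i) + C 6 * X^(2*i+1)))
        = ∑ i ∈ Finset.range (m+1),
          (C (6*((m+1:ℕ):ℚ) - 6*i) * X + C (6*((m+1:ℕ):ℚ) - 6*i + 2)) * X ^ (2*i) := by
      rw [← Finset.sum_add_distrib]
      refine Finset.sum_congr rfl fun i _ => ?_
      rw [term_step]
      have e2 : (6*(m:ℚ) - 6*i + 6) = 6*((m+1:ℕ):ℚ) - 6*i := by push_cast; ring
      have e3 : (6*(m:ℚ) - 6*i + 2 + 6) = 6*((m+1:ℕ):ℚ) - 6*i + 2 := by push_cast; ring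
      rw [e2, e3]
    rw [← add_assoc, hmain, hlast]

/-- chromatic Schultz polynomial of the path `P n`, `n` odd, with
`ζ(v_{i+1}) = 1` iff `i` is even. -/
theorem chromatic_schultz_path_odd (n : ℕ) (hn : 1 ≤ n) (hpar : Odd n) :
    (∑ i ∈ Finset.range n, ∑ j ∈ Finset.range n,
      if i ≤ j then
        C ((if i % 2 = 0 then (1 : ℚ) else 2) + (if j % 2 = 0 then (1 : ℚ) else 2)) *
          X ^ (j - i)
      else 0) =
    ∑ i ∈ Finset.range ((n - 1) / 2 + 1),
      (C (3*(n : ℚ) - 6*i - 3) * X + C (3*(n : ℚ) - 6*i - 1)) * X ^ (2*i) := by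
  obtain ⟨m, rfl⟩ := hpar
  have h2 : (2*m+1-1)/2 + 1 = m + 1 := by omega
  rw [h2]
  have hk := key m
  simp only [zc] at hk
  rw [hk]
  refine Finset.sum_congr rfl fun i _ => ?_
  have e1 : (6*(m:ℚ) - 6*i) = 3*((2*m+1 : ℕ) : ℚ) - 6*i - 3 := by push_cast; ring
  have e2 : (6*(m:ℚ) - 6*i + 2) = 3*((2*m+1 : ℕ) : ℚ) - 6*i - 1 := by push_cast; ring
  rw [e2, e1]
end

section
/- Let n be odd, n ≥ 1, and let P_n be the path with vertices v_1, …, v_n in order, with the 2-colouring ζ(v_i) = 2 if i is odd and ζ(v_i) = 1 if i is even. Then the chromatic Schultz polynomial Σ_{{u,v}} (ζ(u)+ζ(v))x^{d(u,v)} (unordered pairs, diagonal contributing 2ζ(v)) equals Σ_{i=0}^{(n−1)/2} [(3n − 6i − 3)x + (3n − 6i + 1)]·x^{2i}. -/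
open Polynomial Finset

private def zeta (i : ℕ) : ℚ := if i % 2 = 0 then 2 else 1

private lemma pair_sum {M : Type*} [AddCommMonoid M] (f : ℕ → M) :
    ∀ k, ∑ d ∈ Finset.range (2 * k), f d = ∑ i ∈ Finset.range k, (f (2 * i) + f (2 * i + 1))
  | 0 => rfl
  | k + 1 => by
    have h2 : 2 * (k + 1) = (2 * k) + 1 + 1 := by ring
    rw [h2, Finset.sum_range_succ, Finset.sum_range_succ, Finset.sum_range_succ,
      pair_sum f k, add_assoc]

private lemma diag_sum : ∀ m : ℕ,
    ∑ i ∈ Finset.range m, (zeta i + zeta i) = 3 * m + (m % 2 : ℕ)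
  | 0 => by simp
  | m + 1 => by
    rw [Finset.sum_range_succ, diag_sum m]
    rcases Nat.mod_two_eq_zero_or_one m with h | h <;>
      · have h' : (m + 1) % 2 = 1 - m % 2 := by omega
        simp [zeta, h, h']
        ring

private lemma even_sum (m d : ℕ) (hd : d % 2 = 0) :
    ∑ i ∈ Finset.range m, (zeta i + zeta (i + d)) = 3 * m + (m % 2 : ℕ) := by
  rw [← diag_sum m]
  refine Finset.sum_congr rfl fun i _ => ?_
  have : (i + d) % 2 = i % 2 := by omega
  simp [zeta, this]

private lemma odd_sum (m d : ℕ) (hd : d % 2 = 1) :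
    ∑ i ∈ Finset.range m, (zeta i + zeta (i + d)) = 3 * m := by
  have : ∀ i ∈ Finset.range m, zeta i + zeta (i + d) = 3 := by
    intro i _
    have h2 : (i + d) % 2 = 1 - i % 2 := by omega
    rcases Nat.mod_two_eq_zero_or_one i with h | h <;> simp [zeta, h, h2] <;> norm_num
  rw [Finset.sum_congr rfl this, Finset.sum_const, Finset.card_range, nsmul_eq_mul]
  ring

/-- chromatic Schultz polynomial of the path `P n`, `n` odd, with
swapped colouring: `ζ(v_{i+1}) = 2` iff `i` is even. -/
theorem chromatic_schultz_path_odd_swapped (n : ℕ) (hn : 1 ≤ n) (hpar : Odd n) :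
    (∑ i ∈ Finset.range n, ∑ j ∈ Finset.range n,
      if i ≤ j then
        C ((if i % 2 = 0 then (2 : ℚ) else 1) + (if j % 2 = 0 then (2 : ℚ) else 1)) *
          X ^ (j - i)
      else 0) =
    ∑ i ∈ Finset.range ((n - 1) / 2 + 1),
      (C (3*(n : ℚ) - 6*i - 3) * X + C (3*(n : ℚ) - 6*i + 1)) * X ^ (2*i) := by
  have hz : ∀ i : ℕ, (if i % 2 = 0 then (2 : ℚ) else 1) = zeta i := fun _ => rfl
  obtain ⟨t, ht⟩ := hpar
  set k : ℕ := (n - 1) / 2 + 1 with hk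
  have hnk : n = 2 * k - 1 := by omega
  have h2k : 2 * k = n + 1 := by omega
  -- value of the distance-d coefficient
  set val : ℕ → ℚ := fun d => if d % 2 = 0 then 3 * ((n - d : ℕ) : ℚ) + 1
    else 3 * ((n - d : ℕ) : ℚ) with hval
  -- Step 1: LHS as sum over distances
  have step1 : (∑ i ∈ Finset.range n, ∑ j ∈ Finset.range n,
      if i ≤ j then
        C ((if i % 2 = 0 then (2 : ℚ) else 1) + (if j % 2 = 0 then (2 : ℚ) else 1)) *
          X ^ (j - i)
      else 0) = ∑ d ∈ Finset.range n, C (val d) * X ^ d := by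
    simp only [hz]
    have inner : ∀ i : ℕ, (∑ j ∈ Finset.range n,
        if i ≤ j then C (zeta i + zeta j) * X ^ (j - i) else 0)
        = ∑ d ∈ Finset.range (n - i), C (zeta i + zeta (i + d)) * X ^ d := by
      intro i
      rw [← Finset.sum_filter]
      have hfil : (Finset.range n).filter (fun j => i ≤ j) = Finset.Ico i n := by
        ext j; simp [Finset.mem_range, Finset.mem_Ico]; omega
      rw [hfil, Finset.sum_Ico_eq_sum_range]
      exact Finset.sum_congr rfl fun d _ => by rw [Nat.add_sub_cancel_left]
    simp only [inner]
    rw [Finset.sum_comm' (t := fun i => Finset.range (n - i))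
      (s' := fun d => Finset.range (n - d)) (t' := Finset.range n)
      (by intro x y; simp [Finset.mem_range]; omega)]
    refine Finset.sum_congr rfl fun d hd => ?_
    rw [← Finset.sum_mul, ← map_sum]
    congr 1
    rw [Finset.mem_range] at hd
    rcases Nat.mod_two_eq_zero_or_one d with h | h
    · have hm : (n - d) % 2 = 1 := by omega
      rw [even_sum _ _ h, hval]; simp [h, hm]
    · rw [odd_sum _ _ h, hval]; simp [h]
  rw [step1]
  -- Step 2: extend to range (n+1); the top term vanishes
  have htop : C (val n) * X ^ n = 0 := by
    have : val n = 0 := by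
      have hn2 : n % 2 = 1 := by omega
      simp [hval, hn2]
    rw [this]; simp
  have step2 : ∑ d ∈ Finset.range n, C (val d) * X ^ d
      = ∑ d ∈ Finset.range (2 * k), (C (val d) * X ^ d) := by
    rw [h2k, Finset.sum_range_succ, htop, add_zero]
  rw [step2, pair_sum]
  refine Finset.sum_congr rfl fun i hi => ?_
  rw [Finset.mem_range] at hi
  have hhalf : (n - 1) / 2 = t := by omega
  have h1 : 2 * i < n := by omega
  have h2 : (2 * i) % 2 = 0 := by omega
  have h3 : (2 * i + 1) % 2 = 1 := by omega
  have c1 : ((n - 2 * i : ℕ) : ℚ) = (n : ℚ) - 2 * i := by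
    push_cast [Nat.cast_sub h1.le]; ring
  have c2 : ((n - (2 * i + 1) : ℕ) : ℚ) = (n : ℚ) - 2 * i - 1 := by
    push_cast [Nat.cast_sub h1]; ring
  have e1 : val (2 * i) = 3 * (n : ℚ) - 6 * i + 1 := by
    simp only [hval]; rw [if_pos h2, c1]; ring
  have e2 : val (2 * i + 1) = 3 * (n : ℚ) - 6 * i - 3 := by
    simp only [hval]; rw [if_neg (by omega), c2]; ring
  rw [e1, e2]
  ring
end

section
/- Let n be even, n ≥ 4, and let C_n be the cycle with vertices v_1, …, v_n in cyclic order, 2-coloured by ζ(v_i) = 1 if i is odd, ζ(v_i) = 2 if i is even. Then the modified chromatic Schultz polynomial S*(C_n, x) = Σ_{{u,v}} ζ(u)ζ(v)x^{d(u,v)} (unordered pairs, diagonal contributing ζ(v)²) satisfies: the coefficient of x^r is 2n for every odd r with 1 ≤ r < n/2, and 5n/2 for every even r with 0 ≤ r < n/2. -/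
open Polynomial Finset

private def qw (i : ℕ) : ℚ := if i % 2 = 0 then 1 else 2

private lemma qw_mul_odd {i j : ℕ} (h : (i + j) % 2 = 1) : qw i * qw j = 2 := by
  unfold qw
  rcases Nat.mod_two_eq_zero_or_one i with hi | hi <;>
    rcases Nat.mod_two_eq_zero_or_one j with hj | hj
  · exact absurd h (by omega)
  · simp [hi, hj]
  · simp [hi, hj]
  · exact absurd h (by omega)

private lemma qw_mul_even {i j : ℕ} (h : (i + j) % 2 = 0) :
    qw i * qw j = if i % 2 = 0 then (1:ℚ) else 4 := by
  unfold qw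
  rcases Nat.mod_two_eq_zero_or_one i with hi | hi <;>
    rcases Nat.mod_two_eq_zero_or_one j with hj | hj
  · simp [hi, hj]
  · exact absurd h (by omega)
  · exact absurd h (by omega)
  · norm_num [hi, hj]

private lemma sum_w2 (k : ℕ) :
    ∑ i ∈ range (2*k), (if i % 2 = 0 then (1:ℚ) else 4) = 5*k := by
  induction k with
  | zero => simp
  | succ m ih =>
    have h : 2 * (m+1) = (2*m) + 1 + 1 := by ring
    rw [h, Finset.sum_range_succ, Finset.sum_range_succ, ih]
    rw [if_pos (show (2*m) % 2 = 0 by omega),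
      if_neg (show ¬ (2*m+1) % 2 = 0 by omega)]
    push_cast; ring

private lemma aux_coeff (n r : ℕ) :
    ((∑ i ∈ Finset.range n, ∑ j ∈ Finset.range n,
        if i ≤ j then
          C ((if i % 2 = 0 then (1 : ℚ) else 2) * (if j % 2 = 0 then (1 : ℚ) else 2)) *
            X ^ (min (j - i) (n - (j - i)))
        else 0).coeff r)
    = ∑ i ∈ range n, ∑ j ∈ range n,
        if i ≤ j ∧ min (j - i) (n - (j - i)) = r then qw i * qw j else 0 := by
  rw [finset_sum_coeff]
  refine Finset.sum_congr rfl fun i _ => ?_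
  rw [finset_sum_coeff]
  refine Finset.sum_congr rfl fun j _ => ?_
  by_cases h : i ≤ j
  · rw [if_pos h, coeff_C_mul, coeff_X_pow]
    by_cases h2 : min (j - i) (n - (j - i)) = r
    · rw [if_pos h2.symm, mul_one,
        if_pos (show i ≤ j ∧ min (j - i) (n - (j - i)) = r from ⟨h, h2⟩)]
      rfl
    · rw [if_neg (show ¬ r = min (j - i) (n - (j - i)) from fun hh => h2 hh.symm),
        mul_zero,
        if_neg (show ¬ (i ≤ j ∧ min (j - i) (n - (j - i)) = r) from fun hh => h2 hh.2)]
  · rw [if_neg h,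
      if_neg (show ¬ (i ≤ j ∧ min (j - i) (n - (j - i)) = r) from fun hh => h hh.1),
      coeff_zero]

private lemma aux_inner (n r : ℕ) (h2r : 2*r < n) (i : ℕ) (hi : i < n) :
    ∑ j ∈ range n, (if i ≤ j ∧ min (j - i) (n - (j - i)) = r then qw i * qw j else 0)
    = (if i + r < n then qw i * qw (i + r) else 0)
      + (if i < r then qw i * qw (i + (n - r)) else 0) := by
  have step : ∀ j ∈ range n,
      (if i ≤ j ∧ min (j - i) (n - (j - i)) = r then qw i * qw j else 0)
      = (if j = i + r then qw i * qw j else 0)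
        + (if i < r then (if j = i + (n - r) then qw i * qw j else 0) else 0) := by
    intro j hj
    rw [Finset.mem_range] at hj
    by_cases hc : i ≤ j ∧ min (j - i) (n - (j - i)) = r
    · obtain ⟨hij, hmin⟩ := hc
      rw [if_pos ⟨hij, hmin⟩]
      have hor := min_choice (j - i) (n - (j - i))
      have hle1 := min_le_left (j - i) (n - (j - i))
      have hle2 := min_le_right (j - i) (n - (j - i))
      rw [hmin] at hor hle1 hle2
      have hcase : j = i + r ∨ (i < r ∧ j = i + (n - r)) := by omega
      rcases hcase with h1 | ⟨h1, h2⟩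
      · rw [if_pos h1]
        by_cases hir : i < r
        · rw [if_pos hir, if_neg (show ¬ j = i + (n - r) by omega), add_zero]
        · rw [if_neg hir, add_zero]
      · rw [if_neg (show ¬ j = i + r by omega), if_pos h1, if_pos h2, zero_add]
    · rw [if_neg hc]
      have hA : ¬ j = i + r := by
        intro h1
        apply hc
        refine ⟨by omega, ?_⟩
        rw [show j - i = r by omega, show n - r = n - r from rfl]
        exact min_eq_left (by omega)
      have hB : ¬ (i < r ∧ j = i + (n - r)) := by
        rintro ⟨h1, h2⟩
        apply hc
        refine ⟨by omega, ?_⟩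
        rw [show j - i = n - r by omega, show n - (n - r) = r by omega]
        exact min_eq_right (by omega)
      rw [if_neg hA]
      by_cases hir : i < r
      · rw [if_pos hir, if_neg (show ¬ j = i + (n - r) from fun h2 => hB ⟨hir, h2⟩),
          zero_add]
      · rw [if_neg hir, zero_add]
  rw [Finset.sum_congr rfl step, Finset.sum_add_distrib]
  congr 1
  · rw [Finset.sum_ite_eq' (range n)]
    simp only [Finset.mem_range]
  · by_cases hir : i < r
    · simp only [if_pos hir, Finset.sum_ite_eq' (range n), Finset.mem_range]
      rw [if_pos (by omega : i + (n - r) < n)]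
    · simp [hir]

private lemma sum_indicator_range {n t : ℕ} (h : t ≤ n) (f : ℕ → ℚ) :
    ∑ i ∈ range n, (if i ∈ range t then f i else 0) = ∑ i ∈ range t, f i := by
  rw [Finset.sum_ite_mem, Finset.inter_eq_right.mpr (Finset.range_subset_range.mpr h)]

/-- coefficients of the modified chromatic Schultz polynomial of
the even cycle `C n` with the alternating 2-colouring. -/
theorem modified_chromatic_schultz_cycle_even_coeff (n : ℕ) (hn : 4 ≤ n) (hpar : Even n) :
    (∀ r, Odd r → 1 ≤ r → r < n / 2 →
      ((∑ i ∈ Finset.range n, ∑ j ∈ Finset.range n,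
        if i ≤ j then
          C ((if i % 2 = 0 then (1 : ℚ) else 2) * (if j % 2 = 0 then (1 : ℚ) else 2)) *
            X ^ (min (j - i) (n - (j - i)))
        else 0).coeff r) = 2 * (n : ℚ)) ∧
    (∀ r, Even r → r < n / 2 →
      ((∑ i ∈ Finset.range n, ∑ j ∈ Finset.range n,
        if i ≤ j then
          C ((if i % 2 = 0 then (1 : ℚ) else 2) * (if j % 2 = 0 then (1 : ℚ) else 2)) *
            X ^ (min (j - i) (n - (j - i)))
        else 0).coeff r) = 5 * (n : ℚ) / 2) := by
  obtain ⟨m, hm⟩ := hpar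
  constructor
  · intro r hodd h1 h2
    obtain ⟨k, hk⟩ := hodd
    have h2r : 2 * r < n := by omega
    rw [aux_coeff, Finset.sum_congr rfl (fun i hi =>
      aux_inner n r h2r i (Finset.mem_range.mp hi)), Finset.sum_add_distrib]
    have e1 : ∀ i ∈ range n, (if i + r < n then qw i * qw (i + r) else 0)
        = (if i ∈ range (n - r) then (2:ℚ) else 0) := by
      intro i hi
      simp only [Finset.mem_range]
      by_cases h : i + r < n
      · rw [if_pos h, if_pos (show i < n - r by omega), qw_mul_odd (by omega)]
      · rw [if_neg h, if_neg (show ¬ i < n - r by omega)]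
    have e2 : ∀ i ∈ range n, (if i < r then qw i * qw (i + (n - r)) else 0)
        = (if i ∈ range r then (2:ℚ) else 0) := by
      intro i hi
      simp only [Finset.mem_range]
      by_cases h : i < r
      · rw [if_pos h, if_pos h, qw_mul_odd (by omega)]
      · rw [if_neg h, if_neg h]
    rw [Finset.sum_congr rfl e1, Finset.sum_congr rfl e2,
      sum_indicator_range (by omega) _, sum_indicator_range (by omega) _,
      Finset.sum_const, Finset.sum_const, Finset.card_range, Finset.card_range]
    have hrn : r ≤ n := by omega
    simp only [nsmul_eq_mul]
    push_cast [Nat.cast_sub hrn]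
    ring
  · intro r heven h2
    obtain ⟨k, hk⟩ := heven
    have h2r : 2 * r < n := by omega
    rw [aux_coeff, Finset.sum_congr rfl (fun i hi =>
      aux_inner n r h2r i (Finset.mem_range.mp hi)), Finset.sum_add_distrib]
    have e1 : ∀ i ∈ range n, (if i + r < n then qw i * qw (i + r) else 0)
        = (if i ∈ range (n - r) then (if i % 2 = 0 then (1:ℚ) else 4) else 0) := by
      intro i hi
      simp only [Finset.mem_range]
      by_cases h : i + r < n
      · rw [if_pos h, if_pos (show i < n - r by omega), qw_mul_even (by omega)]
      · rw [if_neg h, if_neg (show ¬ i < n - r by omega)]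
    have e2 : ∀ i ∈ range n, (if i < r then qw i * qw (i + (n - r)) else 0)
        = (if i ∈ range r then (if i % 2 = 0 then (1:ℚ) else 4) else 0) := by
      intro i hi
      simp only [Finset.mem_range]
      by_cases h : i < r
      · rw [if_pos h, if_pos h, qw_mul_even (by omega)]
      · rw [if_neg h, if_neg h]
    rw [Finset.sum_congr rfl e1, Finset.sum_congr rfl e2,
      sum_indicator_range (by omega) _, sum_indicator_range (by omega) _]
    rw [show n - r = 2 * (m - k) by omega, show r = 2 * k by omega, sum_w2, sum_w2]
    have hkm : k ≤ m := by omega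
    have hnm : (n : ℚ) = 2 * m := by rw [hm]; push_cast; ring
    rw [hnm]
    push_cast [Nat.cast_sub hkm]
    ring
end

section
/- Let n be odd, n ≥ 3, and let C_n be the cycle with vertices v_1, …, v_n in cyclic order, coloured by ζ(v_i) = 1 for i odd, i < n; ζ(v_i) = 2 for i even; and ζ(v_n) = 3. Then for every r with 1 ≤ r ≤ (n−1)/2, the sum Σ_{{u,v} : d(u,v) = r} (ζ(u)+ζ(v)) over unordered pairs of vertices at distance exactly r equals 3(n+1); moreover Σ_{v} 2ζ(v) = 3(n+1). Consequently the chromatic Schultz polynomial S(C_n,x) = Σ_{{u,v}} (ζ(u)+ζ(v))x^{d(u,v)} equals 3(n+1)·Σ_{i=0}^{(n−1)/2} x^i. -/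
open Polynomial Finset

lemma even_odd_sum (m : ℕ) :
    ∑ i ∈ Finset.range (2*m), (if i % 2 = 0 then (1:ℚ) else 2) = 3*m := by
  induction m with
  | zero => simp
  | succ k ih =>
    rw [show 2*(k+1) = (2*k)+1+1 by ring, Finset.sum_range_succ, Finset.sum_range_succ, ih,
      if_pos (by omega : (2*k) % 2 = 0), if_neg (by omega : ¬ (2*k+1) % 2 = 0)]
    push_cast
    ring

lemma weight_sum (n m : ℕ) (hm : n = 2*m+1) :
    ∑ i ∈ Finset.range n, (if i = n-1 then (3:ℚ) else if i % 2 = 0 then 1 else 2)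
      = 3*(m+1) := by
  subst hm
  rw [show 2*m+1 = (2*m)+1 from rfl, Finset.sum_range_succ,
    if_pos (by omega : 2*m = 2*m+1-1)]
  rw [Finset.sum_congr rfl (fun i hi => ?_), even_odd_sum]
  · push_cast; ring
  · simp only [Finset.mem_range] at hi
    rw [if_neg (by omega)]

lemma layer_sum (w : ℕ → ℚ) (n m r : ℕ) (hm : n = 2*m+1) (hr1 : 1 ≤ r) (hr2 : r ≤ m) :
    (∑ i ∈ Finset.range n, ∑ j ∈ Finset.range n,
      if i < j ∧ min (j - i) (n - (j - i)) = r then w i + w j else 0)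
    = 2 * ∑ i ∈ Finset.range n, w i := by
  have step1 : ∀ i ∈ Finset.range n,
      (∑ j ∈ Finset.range n, if i < j ∧ min (j - i) (n - (j - i)) = r then w i + w j else 0)
      = (if i + r ∈ Finset.range n then w i + w (i + r) else 0)
        + (if i + (n - r) ∈ Finset.range n then w i + w (i + (n - r)) else 0) := by
    intro i hi
    simp only [Finset.mem_range] at hi ⊢
    have key : ∀ j ∈ Finset.range n,
        (if i < j ∧ min (j - i) (n - (j - i)) = r then w i + w j else 0)
        = (if j = i + r then w i + w j else 0) + (if j = i + (n - r) then w i + w j else 0) := by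
      intro j hj
      simp only [Finset.mem_range] at hj
      by_cases ha : j = i + r
      · rw [if_pos (by omega), if_pos ha, if_neg (by omega), add_zero]
      · by_cases hb : j = i + (n - r)
        · rw [if_pos (by omega), if_neg ha, if_pos hb, zero_add]
        · rw [if_neg (by omega), if_neg ha, if_neg hb, add_zero]
    rw [Finset.sum_congr rfl key, Finset.sum_add_distrib,
      Finset.sum_ite_eq' (Finset.range n) (i+r) (fun j => w i + w j),
      Finset.sum_ite_eq' (Finset.range n) (i+(n-r)) (fun j => w i + w j)]
    simp only [Finset.mem_range]
  rw [Finset.sum_congr rfl step1, Finset.sum_add_distrib]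
  have e1 : (∑ i ∈ Finset.range n, if i + r ∈ Finset.range n then w i + w (i+r) else 0)
      = ∑ i ∈ Finset.range (n - r), (w i + w (i + r)) := by
    rw [← Finset.sum_subset (Finset.range_subset_range.mpr (by omega : n - r ≤ n))
      (fun x hx hx' => ?_)]
    · exact Finset.sum_congr rfl fun i hi => by
        simp only [Finset.mem_range] at hi; rw [if_pos (by simp only [Finset.mem_range]; omega)]
    · simp only [Finset.mem_range] at hx hx'; rw [if_neg (by simp only [Finset.mem_range]; omega)]
  have e2 : (∑ i ∈ Finset.range n, if i + (n - r) ∈ Finset.range n then w i + w (i+(n-r)) else 0)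
      = ∑ i ∈ Finset.range r, (w i + w (i + (n - r))) := by
    rw [← Finset.sum_subset (Finset.range_subset_range.mpr (by omega : r ≤ n))
      (fun x hx hx' => ?_)]
    · exact Finset.sum_congr rfl fun i hi => by
        simp only [Finset.mem_range] at hi; rw [if_pos (by simp only [Finset.mem_range]; omega)]
    · simp only [Finset.mem_range] at hx hx'; rw [if_neg (by simp only [Finset.mem_range]; omega)]
  rw [e1, e2, Finset.sum_add_distrib, Finset.sum_add_distrib]
  have h1 : ∑ i ∈ Finset.range n, w i
      = (∑ i ∈ Finset.range (n-r), w i) + ∑ i ∈ Finset.range r, w (i + (n - r)) := by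
    have := Finset.sum_range_add w (n-r) r
    rw [show (n-r)+r = n by omega] at this
    rw [this]
    exact congrArg _ (Finset.sum_congr rfl fun i _ => by rw [add_comm])
  have h2 : ∑ i ∈ Finset.range n, w i
      = (∑ i ∈ Finset.range r, w i) + ∑ i ∈ Finset.range (n-r), w (i + r) := by
    have := Finset.sum_range_add w r (n-r)
    rw [show r+(n-r) = n by omega] at this
    rw [this]
    exact congrArg _ (Finset.sum_congr rfl fun i _ => by rw [add_comm])
  linarith

lemma diag_zero (n : ℕ) (w : ℕ → ℚ) :
    (∑ i ∈ Finset.range n, ∑ j ∈ Finset.range n,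
      if i < j ∧ min (j - i) (n - (j - i)) = 0 then w i + w j else 0) = 0 :=
  Finset.sum_eq_zero fun i hi => Finset.sum_eq_zero fun j hj => by
    simp only [Finset.mem_range] at hi hj
    exact if_neg (by omega)

lemma poly_part (w : ℕ → ℚ) (n m : ℕ) (hm : n = 2*m+1) :
    (∑ i ∈ Finset.range n, ∑ j ∈ Finset.range n,
      if i ≤ j then C (w i + w j) * X ^ (min (j - i) (n - (j - i))) else 0)
    = C (2 * ∑ i ∈ Finset.range n, w i) * ∑ i ∈ Finset.range (m + 1), X ^ i := by
  have split : (∑ i ∈ Finset.range n, ∑ j ∈ Finset.range n,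
      if i ≤ j then C (w i + w j) * X ^ (min (j - i) (n - (j - i))) else 0)
      = (∑ i ∈ Finset.range n, ∑ j ∈ Finset.range n,
          if i = j then C (w i + w j) * X ^ (min (j - i) (n - (j - i))) else 0)
        + (∑ i ∈ Finset.range n, ∑ j ∈ Finset.range n,
          if i < j then C (w i + w j) * X ^ (min (j - i) (n - (j - i))) else 0) := by
    rw [← Finset.sum_add_distrib]
    refine Finset.sum_congr rfl fun i _ => ?_
    rw [← Finset.sum_add_distrib]
    refine Finset.sum_congr rfl fun j _ => ?_
    by_cases hij : i = j
    · rw [if_pos (le_of_eq hij), if_pos hij, if_neg (by omega), add_zero]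
    · by_cases h2 : i < j
      · rw [if_pos (le_of_lt h2), if_neg hij, if_pos h2, zero_add]
      · rw [if_neg (by omega), if_neg hij, if_neg h2, add_zero]
  have hD : (∑ i ∈ Finset.range n, ∑ j ∈ Finset.range n,
      if i = j then C (w i + w j) * X ^ (min (j - i) (n - (j - i))) else 0)
      = C (2 * ∑ i ∈ Finset.range n, w i) := by
    have key : ∀ i ∈ Finset.range n,
        (∑ j ∈ Finset.range n,
          if i = j then C (w i + w j) * X ^ (min (j - i) (n - (j - i))) else 0)
        = C (2 * w i) := by
      intro i hi
      rw [Finset.sum_ite_eq (Finset.range n) i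
        (fun j => C (w i + w j) * X ^ (min (j - i) (n - (j - i)))), if_pos hi]
      simp [two_mul]
    rw [Finset.sum_congr rfl key, Finset.mul_sum]
    exact (map_sum C (fun i => 2 * w i) (Finset.range n)).symm
  have hO : (∑ i ∈ Finset.range n, ∑ j ∈ Finset.range n,
      if i < j then C (w i + w j) * X ^ (min (j - i) (n - (j - i))) else 0)
      = ∑ r ∈ Finset.range (m + 1),
          C (∑ i ∈ Finset.range n, ∑ j ∈ Finset.range n,
            if i < j ∧ min (j - i) (n - (j - i)) = r then w i + w j else 0) * X ^ r := by
    have ptw : ∀ i, ∀ j,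
        (if i < j then C (w i + w j) * X ^ (min (j - i) (n - (j - i))) else 0)
        = ∑ r ∈ Finset.range (m + 1),
            C (if i < j ∧ min (j - i) (n - (j - i)) = r then w i + w j else 0) * X ^ r := by
      intro i j
      have key : ∀ r ∈ Finset.range (m + 1),
          C (if i < j ∧ min (j - i) (n - (j - i)) = r then w i + w j else 0) * X ^ r
          = if r = min (j - i) (n - (j - i)) then
              (if i < j then C (w i + w j) * X ^ (min (j - i) (n - (j - i))) else 0) else 0 := by
        intro r _
        by_cases h1 : r = min (j - i) (n - (j - i))
        · rw [if_pos h1]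
          by_cases h2 : i < j
          · rw [if_pos ⟨h2, h1.symm⟩, if_pos h2, h1]
          · rw [if_neg (fun hc => h2 hc.1), if_neg h2, map_zero, zero_mul]
        · rw [if_neg h1, if_neg (fun hc => h1 hc.2.symm), map_zero, zero_mul]
      rw [Finset.sum_congr rfl key,
        Finset.sum_ite_eq' (Finset.range (m + 1)) (min (j - i) (n - (j - i)))
          (fun _ => if i < j then C (w i + w j) * X ^ (min (j - i) (n - (j - i))) else 0),
        if_pos (Finset.mem_range.mpr (by omega))]
    calc (∑ i ∈ Finset.range n, ∑ j ∈ Finset.range n,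
        if i < j then C (w i + w j) * X ^ (min (j - i) (n - (j - i))) else 0)
        = ∑ i ∈ Finset.range n, ∑ j ∈ Finset.range n, ∑ r ∈ Finset.range (m + 1),
            C (if i < j ∧ min (j - i) (n - (j - i)) = r then w i + w j else 0) * X ^ r :=
          Finset.sum_congr rfl fun i _ => Finset.sum_congr rfl fun j _ => ptw i j
      _ = ∑ i ∈ Finset.range n, ∑ r ∈ Finset.range (m + 1), ∑ j ∈ Finset.range n,
            C (if i < j ∧ min (j - i) (n - (j - i)) = r then w i + w j else 0) * X ^ r :=
          Finset.sum_congr rfl fun i _ => Finset.sum_comm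
      _ = ∑ r ∈ Finset.range (m + 1), ∑ i ∈ Finset.range n, ∑ j ∈ Finset.range n,
            C (if i < j ∧ min (j - i) (n - (j - i)) = r then w i + w j else 0) * X ^ r :=
          Finset.sum_comm
      _ = ∑ r ∈ Finset.range (m + 1),
            C (∑ i ∈ Finset.range n, ∑ j ∈ Finset.range n,
              if i < j ∧ min (j - i) (n - (j - i)) = r then w i + w j else 0) * X ^ r := by
          refine Finset.sum_congr rfl fun r _ => ?_
          rw [map_sum, Finset.sum_mul]
          refine Finset.sum_congr rfl fun i _ => ?_
          rw [map_sum, Finset.sum_mul]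
  rw [split, hD, hO, Finset.sum_range_succ' _ m, diag_zero, map_zero, zero_mul, add_zero]
  have hL : ∀ k ∈ Finset.range m,
      C (∑ i ∈ Finset.range n, ∑ j ∈ Finset.range n,
        if i < j ∧ min (j - i) (n - (j - i)) = k + 1 then w i + w j else 0) * X ^ (k + 1)
      = C (2 * ∑ i ∈ Finset.range n, w i) * X ^ (k + 1) := by
    intro k hk
    simp only [Finset.mem_range] at hk
    rw [layer_sum w n m (k+1) hm (by omega) (by omega)]
  rw [Finset.sum_congr rfl hL, Finset.sum_range_succ' _ m, pow_zero]
  rw [mul_add, mul_one, add_comm, ← Finset.mul_sum]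

/-- the odd cycle `C n` with the standard 3-colouring
(`v_{i+1}` for `i < n - 1`: label 1 if `i` even, 2 if `i` odd; `v_n` gets 3).
Every distance layer contributes weight `3(n+1)`, as does the diagonal, and the
chromatic Schultz polynomial is `3(n+1)·Σ_{i=0}^{(n-1)/2} x^i`. -/
theorem chromatic_schultz_cycle_odd (n : ℕ) (hn : 3 ≤ n) (hpar : Odd n) :
    (∀ r, 1 ≤ r → r ≤ (n - 1) / 2 →
      (∑ i ∈ Finset.range n, ∑ j ∈ Finset.range n,
        if i < j ∧ min (j - i) (n - (j - i)) = r then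
          ((if i = n - 1 then (3 : ℚ) else if i % 2 = 0 then 1 else 2) +
           (if j = n - 1 then (3 : ℚ) else if j % 2 = 0 then 1 else 2))
        else 0) = 3 * ((n : ℚ) + 1)) ∧
    (∑ i ∈ Finset.range n,
      2 * (if i = n - 1 then (3 : ℚ) else if i % 2 = 0 then 1 else 2)) = 3 * ((n : ℚ) + 1) ∧
    (∑ i ∈ Finset.range n, ∑ j ∈ Finset.range n,
      if i ≤ j then
        C ((if i = n - 1 then (3 : ℚ) else if i % 2 = 0 then 1 else 2) +
           (if j = n - 1 then (3 : ℚ) else if j % 2 = 0 then 1 else 2)) *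
          X ^ (min (j - i) (n - (j - i)))
      else 0) =
    C (3 * ((n : ℚ) + 1)) * ∑ i ∈ Finset.range ((n - 1) / 2 + 1), X ^ i := by
  obtain ⟨m, hm⟩ := hpar
  have hhalf : (n - 1) / 2 = m := by omega
  have hW := weight_sum n m hm
  have hcast : 2 * (3 * ((m : ℚ) + 1)) = 3 * ((n : ℚ) + 1) := by
    rw [hm]; push_cast; ring
  refine ⟨fun r hr1 hr2 => ?_, ?_, ?_⟩
  · have h := layer_sum (fun i => if i = n-1 then (3:ℚ) else if i % 2 = 0 then 1 else 2)
      n m r hm hr1 (by omega)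
    exact h.trans (by rw [hW]; exact hcast)
  · rw [← Finset.mul_sum, hW]; exact hcast
  · have h := poly_part (fun i => if i = n-1 then (3:ℚ) else if i % 2 = 0 then 1 else 2) n m hm
    refine h.trans ?_
    rw [hW, hhalf, hcast]
end

section
/- Let n be odd, n ≥ 3, and let C_n be the cycle with vertices v_1, …, v_n in cyclic order. Consider the colouring ζ given by ζ(v_i) = 1 for i odd with i < n, ζ(v_i) = 2 for i even, and ζ(v_n) = 3. For each even r with 2 ≤ r ≤ (n−1)/2: among the n unordered pairs of vertices at distance r, exactly (n−r−1)/2 pairs have colour labels (1,1), exactly (n−r−1)/2 pairs have labels (2,2), exactly r−1 pairs have labels (1,2), exactly one pair has labels (1,3), and exactly one pair has labels (2,3). -/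
open Finset

def oddCycleLabel (n i : ℕ) : ℕ :=
  if i = n - 1 then 3 else if i % 2 = 0 then 1 else 2

lemma lbl1 (n i : ℕ) : oddCycleLabel n i = 1 ↔ (i ≠ n - 1 ∧ i % 2 = 0) := by
  unfold oddCycleLabel; split_ifs <;> omega

lemma lbl2 (n i : ℕ) : oddCycleLabel n i = 2 ↔ (i ≠ n - 1 ∧ i % 2 = 1) := by
  unfold oddCycleLabel; split_ifs <;> omega

lemma lbl3 (n i : ℕ) : oddCycleLabel n i = 3 ↔ i = n - 1 := by
  unfold oddCycleLabel; split_ifs <;> omega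

/-- colour-pair distribution among the distance-`r` pairs of the
odd cycle for even `r` with `2 ≤ r ≤ (n-1)/2`. -/
theorem cycle_odd_colour_pairs_even_distance (n : ℕ) (hn : 3 ≤ n) (hpar : Odd n)
    (r : ℕ) (hr : Even r) (hr2 : 2 ≤ r) (hrd : r ≤ (n - 1) / 2) :
    (((Finset.range n ×ˢ Finset.range n).filter (fun p =>
        p.1 < p.2 ∧ min (p.2 - p.1) (n - (p.2 - p.1)) = r ∧
        oddCycleLabel n p.1 = 1 ∧ oddCycleLabel n p.2 = 1)).card = (n - r - 1) / 2) ∧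
    (((Finset.range n ×ˢ Finset.range n).filter (fun p =>
        p.1 < p.2 ∧ min (p.2 - p.1) (n - (p.2 - p.1)) = r ∧
        oddCycleLabel n p.1 = 2 ∧ oddCycleLabel n p.2 = 2)).card = (n - r - 1) / 2) ∧
    (((Finset.range n ×ˢ Finset.range n).filter (fun p =>
        p.1 < p.2 ∧ min (p.2 - p.1) (n - (p.2 - p.1)) = r ∧
        ((oddCycleLabel n p.1 = 1 ∧ oddCycleLabel n p.2 = 2) ∨
         (oddCycleLabel n p.1 = 2 ∧ oddCycleLabel n p.2 = 1)))).card = r - 1) ∧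
    (((Finset.range n ×ˢ Finset.range n).filter (fun p =>
        p.1 < p.2 ∧ min (p.2 - p.1) (n - (p.2 - p.1)) = r ∧
        ((oddCycleLabel n p.1 = 1 ∧ oddCycleLabel n p.2 = 3) ∨
         (oddCycleLabel n p.1 = 3 ∧ oddCycleLabel n p.2 = 1)))).card = 1) ∧
    (((Finset.range n ×ˢ Finset.range n).filter (fun p =>
        p.1 < p.2 ∧ min (p.2 - p.1) (n - (p.2 - p.1)) = r ∧
        ((oddCycleLabel n p.1 = 2 ∧ oddCycleLabel n p.2 = 3) ∨
         (oddCycleLabel n p.1 = 3 ∧ oddCycleLabel n p.2 = 2)))).card = 1) := by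
  obtain ⟨m, hm⟩ := hpar
  obtain ⟨s, hs⟩ := hr
  refine ⟨?_, ?_, ?_, ?_, ?_⟩
  · rw [← Finset.card_range ((n - r - 1) / 2)]
    refine Finset.card_bij' (fun p _ => p.1 / 2) (fun k _ => (2 * k, 2 * k + r)) ?_ ?_ ?_ ?_
    · rintro ⟨a, b⟩ hp
      simp only [Finset.mem_filter, Finset.mem_product, Finset.mem_range, lbl1] at hp ⊢
      omega
    · rintro k hk
      simp only [Finset.mem_filter, Finset.mem_product, Finset.mem_range, lbl1] at hk ⊢
      omega
    · rintro ⟨a, b⟩ hp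
      simp only [Finset.mem_filter, Finset.mem_product, Finset.mem_range, lbl1] at hp
      simp only [Prod.mk.injEq, true_and, and_true]
      omega
    · rintro k hk
      simp only [Finset.mem_range] at hk
      show 2 * k / 2 = k
      omega
  · rw [← Finset.card_range ((n - r - 1) / 2)]
    refine Finset.card_bij' (fun p _ => p.1 / 2) (fun k _ => (2 * k + 1, 2 * k + 1 + r)) ?_ ?_ ?_ ?_
    · rintro ⟨a, b⟩ hp
      simp only [Finset.mem_filter, Finset.mem_product, Finset.mem_range, lbl2] at hp ⊢
      omega
    · rintro k hk
      simp only [Finset.mem_filter, Finset.mem_product, Finset.mem_range, lbl2] at hk ⊢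
      omega
    · rintro ⟨a, b⟩ hp
      simp only [Finset.mem_filter, Finset.mem_product, Finset.mem_range, lbl2] at hp
      simp only [Prod.mk.injEq, true_and, and_true]
      omega
    · rintro k hk
      simp only [Finset.mem_range] at hk
      show (2 * k + 1) / 2 = k
      omega
  · rw [← Finset.card_range (r - 1)]
    refine Finset.card_bij' (fun p _ => p.1) (fun k _ => (k, k + n - r)) ?_ ?_ ?_ ?_
    · rintro ⟨a, b⟩ hp
      simp only [Finset.mem_filter, Finset.mem_product, Finset.mem_range, lbl1, lbl2] at hp ⊢
      omega
    · rintro k hk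
      simp only [Finset.mem_filter, Finset.mem_product, Finset.mem_range, lbl1, lbl2] at hk ⊢
      omega
    · rintro ⟨a, b⟩ hp
      simp only [Finset.mem_filter, Finset.mem_product, Finset.mem_range, lbl1, lbl2] at hp
      simp only [Prod.mk.injEq, true_and, and_true]
      omega
    · rintro k hk
      rfl
  · have : ((Finset.range n ×ˢ Finset.range n).filter (fun p =>
        p.1 < p.2 ∧ min (p.2 - p.1) (n - (p.2 - p.1)) = r ∧
        ((oddCycleLabel n p.1 = 1 ∧ oddCycleLabel n p.2 = 3) ∨
         (oddCycleLabel n p.1 = 3 ∧ oddCycleLabel n p.2 = 1)))) = {(n - 1 - r, n - 1)} := by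
      ext ⟨a, b⟩
      simp only [Finset.mem_filter, Finset.mem_product, Finset.mem_range, lbl1, lbl3,
        Finset.mem_singleton, Prod.mk.injEq]
      omega
    rw [this, Finset.card_singleton]
  · have : ((Finset.range n ×ˢ Finset.range n).filter (fun p =>
        p.1 < p.2 ∧ min (p.2 - p.1) (n - (p.2 - p.1)) = r ∧
        ((oddCycleLabel n p.1 = 2 ∧ oddCycleLabel n p.2 = 3) ∨
         (oddCycleLabel n p.1 = 3 ∧ oddCycleLabel n p.2 = 2)))) = {(r - 1, n - 1)} := by
      ext ⟨a, b⟩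
      simp only [Finset.mem_filter, Finset.mem_product, Finset.mem_range, lbl2, lbl3,
        Finset.mem_singleton, Prod.mk.injEq]
      omega
    rw [this, Finset.card_singleton]
end

section
/- Let n be odd, n ≥ 3, and let C_n be the cycle with vertices v_1, …, v_n in cyclic order, with colouring ζ(v_i) = 1 for i odd, i < n; ζ(v_i) = 2 for i even; ζ(v_n) = 3. For each odd r with 1 ≤ r ≤ (n−1)/2: among the n unordered pairs of vertices at distance r, exactly (r−1)/2 pairs have colour labels (1,1), exactly (r−1)/2 pairs have labels (2,2), exactly n−r−1 pairs have labels (1,2), exactly one pair has labels (1,3), and exactly one pair has labels (2,3). -/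
open Finset

lemma oddCycleLabel_eq_one {n i : ℕ} :
    oddCycleLabel n i = 1 ↔ i ≠ n - 1 ∧ i % 2 = 0 := by
  unfold oddCycleLabel; split_ifs <;> omega

lemma oddCycleLabel_eq_two {n i : ℕ} :
    oddCycleLabel n i = 2 ↔ i ≠ n - 1 ∧ i % 2 = 1 := by
  unfold oddCycleLabel; split_ifs <;> omega

lemma oddCycleLabel_eq_three {n i : ℕ} :
    oddCycleLabel n i = 3 ↔ i = n - 1 := by
  unfold oddCycleLabel; split_ifs <;> omega

/-- colour-pair distribution among the distance-`r` pairs of the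
odd cycle for odd `r` with `1 ≤ r ≤ (n-1)/2`. -/
theorem cycle_odd_colour_pairs_odd_distance (n : ℕ) (hn : 3 ≤ n) (hpar : Odd n)
    (r : ℕ) (hr : Odd r) (hr1 : 1 ≤ r) (hrd : r ≤ (n - 1) / 2) :
    (((Finset.range n ×ˢ Finset.range n).filter (fun p =>
        p.1 < p.2 ∧ min (p.2 - p.1) (n - (p.2 - p.1)) = r ∧
        oddCycleLabel n p.1 = 1 ∧ oddCycleLabel n p.2 = 1)).card = (r - 1) / 2) ∧
    (((Finset.range n ×ˢ Finset.range n).filter (fun p =>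
        p.1 < p.2 ∧ min (p.2 - p.1) (n - (p.2 - p.1)) = r ∧
        oddCycleLabel n p.1 = 2 ∧ oddCycleLabel n p.2 = 2)).card = (r - 1) / 2) ∧
    (((Finset.range n ×ˢ Finset.range n).filter (fun p =>
        p.1 < p.2 ∧ min (p.2 - p.1) (n - (p.2 - p.1)) = r ∧
        ((oddCycleLabel n p.1 = 1 ∧ oddCycleLabel n p.2 = 2) ∨
         (oddCycleLabel n p.1 = 2 ∧ oddCycleLabel n p.2 = 1)))).card = n - r - 1) ∧
    (((Finset.range n ×ˢ Finset.range n).filter (fun p =>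
        p.1 < p.2 ∧ min (p.2 - p.1) (n - (p.2 - p.1)) = r ∧
        ((oddCycleLabel n p.1 = 1 ∧ oddCycleLabel n p.2 = 3) ∨
         (oddCycleLabel n p.1 = 3 ∧ oddCycleLabel n p.2 = 1)))).card = 1) ∧
    (((Finset.range n ×ˢ Finset.range n).filter (fun p =>
        p.1 < p.2 ∧ min (p.2 - p.1) (n - (p.2 - p.1)) = r ∧
        ((oddCycleLabel n p.1 = 2 ∧ oddCycleLabel n p.2 = 3) ∨
         (oddCycleLabel n p.1 = 3 ∧ oddCycleLabel n p.2 = 2)))).card = 1) := by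
  have hn2 : n % 2 = 1 := Nat.odd_iff.mp hpar
  have hr2 : r % 2 = 1 := Nat.odd_iff.mp hr
  refine ⟨?_, ?_, ?_, ?_, ?_⟩
  · -- (1,1): pairs (2k, 2k + (n-r)) for k < (r-1)/2
    have hset : ((Finset.range n ×ˢ Finset.range n).filter (fun p =>
        p.1 < p.2 ∧ min (p.2 - p.1) (n - (p.2 - p.1)) = r ∧
        oddCycleLabel n p.1 = 1 ∧ oddCycleLabel n p.2 = 1)) =
        (Finset.range ((r - 1) / 2)).image (fun k => (2 * k, 2 * k + (n - r))) := by
      ext ⟨a, b⟩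
      simp only [mem_filter, mem_product, mem_range, mem_image,
        oddCycleLabel_eq_one, Prod.mk.injEq]
      constructor
      · rintro ⟨⟨ha, hb⟩, hab, hmin, ⟨ha1, ha2⟩, ⟨hb1, hb2⟩⟩
        exact ⟨a / 2, by omega, by omega, by omega⟩
      · rintro ⟨k, hk, rfl, rfl⟩
        refine ⟨⟨by omega, by omega⟩, by omega, by omega, ⟨by omega, by omega⟩,
          by omega, by omega⟩
    rw [hset, Finset.card_image_of_injective _ (fun x y h => by
      simp only [Prod.mk.injEq] at h; omega), Finset.card_range]
  · -- (2,2): pairs (2k+1, 2k+1 + (n-r)) for k < (r-1)/2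
    have hset : ((Finset.range n ×ˢ Finset.range n).filter (fun p =>
        p.1 < p.2 ∧ min (p.2 - p.1) (n - (p.2 - p.1)) = r ∧
        oddCycleLabel n p.1 = 2 ∧ oddCycleLabel n p.2 = 2)) =
        (Finset.range ((r - 1) / 2)).image (fun k => (2 * k + 1, 2 * k + 1 + (n - r))) := by
      ext ⟨a, b⟩
      simp only [mem_filter, mem_product, mem_range, mem_image,
        oddCycleLabel_eq_two, Prod.mk.injEq]
      constructor
      · rintro ⟨⟨ha, hb⟩, hab, hmin, ⟨ha1, ha2⟩, ⟨hb1, hb2⟩⟩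
        exact ⟨a / 2, by omega, by omega, by omega⟩
      · rintro ⟨k, hk, rfl, rfl⟩
        refine ⟨⟨by omega, by omega⟩, by omega, by omega, ⟨by omega, by omega⟩,
          by omega, by omega⟩
    rw [hset, Finset.card_image_of_injective _ (fun x y h => by
      simp only [Prod.mk.injEq] at h; omega), Finset.card_range]
  · -- (1,2): pairs (i, i + r) for i < n - r - 1
    have hset : ((Finset.range n ×ˢ Finset.range n).filter (fun p =>
        p.1 < p.2 ∧ min (p.2 - p.1) (n - (p.2 - p.1)) = r ∧
        ((oddCycleLabel n p.1 = 1 ∧ oddCycleLabel n p.2 = 2) ∨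
         (oddCycleLabel n p.1 = 2 ∧ oddCycleLabel n p.2 = 1)))) =
        (Finset.range (n - r - 1)).image (fun i => (i, i + r)) := by
      ext ⟨a, b⟩
      simp only [mem_filter, mem_product, mem_range, mem_image,
        oddCycleLabel_eq_one, oddCycleLabel_eq_two, Prod.mk.injEq]
      constructor
      · rintro ⟨⟨ha, hb⟩, hab, hmin, (⟨⟨ha1, ha2⟩, hb1, hb2⟩ | ⟨⟨ha1, ha2⟩, hb1, hb2⟩)⟩ <;>
          exact ⟨a, by omega, by omega, by omega⟩
      · rintro ⟨i, hi, rfl, rfl⟩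
        refine ⟨⟨by omega, by omega⟩, by omega, by omega, ?_⟩
        rcases Nat.even_or_odd i with h | h
        · rw [Nat.even_iff] at h
          left; exact ⟨⟨by omega, by omega⟩, by omega, by omega⟩
        · rw [Nat.odd_iff] at h
          right; exact ⟨⟨by omega, by omega⟩, by omega, by omega⟩
    rw [hset, Finset.card_image_of_injective _ (fun x y h => by
      simp only [Prod.mk.injEq] at h; omega), Finset.card_range]
  · -- (1,3): the single pair (r - 1, n - 1)
    have hset : ((Finset.range n ×ˢ Finset.range n).filter (fun p =>
        p.1 < p.2 ∧ min (p.2 - p.1) (n - (p.2 - p.1)) = r ∧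
        ((oddCycleLabel n p.1 = 1 ∧ oddCycleLabel n p.2 = 3) ∨
         (oddCycleLabel n p.1 = 3 ∧ oddCycleLabel n p.2 = 1)))) =
        {(r - 1, n - 1)} := by
      ext ⟨a, b⟩
      simp only [mem_filter, mem_product, mem_range, mem_singleton,
        oddCycleLabel_eq_one, oddCycleLabel_eq_three, Prod.mk.injEq]
      omega
    rw [hset, Finset.card_singleton]
  · -- (2,3): the single pair (n - 1 - r, n - 1)
    have hset : ((Finset.range n ×ˢ Finset.range n).filter (fun p =>
        p.1 < p.2 ∧ min (p.2 - p.1) (n - (p.2 - p.1)) = r ∧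
        ((oddCycleLabel n p.1 = 2 ∧ oddCycleLabel n p.2 = 3) ∨
         (oddCycleLabel n p.1 = 3 ∧ oddCycleLabel n p.2 = 2)))) =
        {(n - 1 - r, n - 1)} := by
      ext ⟨a, b⟩
      simp only [mem_filter, mem_product, mem_range, mem_singleton,
        oddCycleLabel_eq_two, oddCycleLabel_eq_three, Prod.mk.injEq]
      omega
    rw [hset, Finset.card_singleton]
end

section
/- Let n be odd, n ≥ 3, and let C_n be the cycle with vertices v_1, …, v_n, coloured by ζ(v_i) = 3 for i odd with i < n, ζ(v_i) = 2 for i even, ζ(v_n) = 1 (the colouring obtained by swapping labels 1 and 3 in the standard odd-cycle colouring). Then for every r with 1 ≤ r ≤ (n−1)/2, Σ_{{u,v} : d(u,v) = r} (ζ(u)+ζ(v)) = 5n − 3, and also Σ_v 2ζ(v) = 5n − 3; hence the chromatic Schultz polynomial equals (5n−3)·Σ_{i=0}^{(n−1)/2} x^i. -/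
open Polynomial Finset


lemma aux_g (k : ℕ) :
    ∑ i ∈ Finset.range (2*k), (if i % 2 = 0 then (3:ℚ) else 2) = 5*k := by
  induction k with
  | zero => simp
  | succ k ih =>
    rw [show 2*(k+1) = (2*k+1)+1 by ring, Finset.sum_range_succ, Finset.sum_range_succ, ih,
      if_pos (by omega : (2*k) % 2 = 0), if_neg (by omega : ¬ (2*k+1) % 2 = 0)]
    push_cast; ring

lemma aux_T (n : ℕ) (hn : 3 ≤ n) (hodd : n % 2 = 1) :
    ∑ i ∈ Finset.range n, (if i = n - 1 then (1:ℚ) else if i % 2 = 0 then 3 else 2)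
      = (5*n - 3)/2 := by
  obtain ⟨t, rfl⟩ : ∃ t, n = t + 1 := ⟨n-1, by omega⟩
  obtain ⟨k, hk⟩ : ∃ k, t = 2*k := ⟨t/2, by omega⟩
  have ht : t + 1 - 1 = t := by omega
  rw [Finset.sum_range_succ, ht, if_pos rfl]
  rw [Finset.sum_congr rfl (fun i hi => if_neg (by rw [Finset.mem_range] at hi; omega)), hk, aux_g]
  push_cast [hk]; ring

lemma aux_layer (n : ℕ) (f : ℕ → ℚ) (r : ℕ) (hr1 : 1 ≤ r) (hr2 : 2*r < n) :
    ∑ i ∈ Finset.range n, ∑ j ∈ Finset.range n,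
      (if i < j ∧ min (j - i) (n - (j - i)) = r then f i + f j else 0)
    = 2 * ∑ i ∈ Finset.range n, f i := by
  have inner : ∀ i ∈ Finset.range n, ∑ j ∈ Finset.range n,
      (if i < j ∧ min (j - i) (n - (j - i)) = r then f i + f j else 0)
      = (if i + r < n then f i + f (i + r) else 0)
        + (if i + (n - r) < n then f i + f (i + (n - r)) else 0) := by
    intro i hi
    rw [Finset.mem_range] at hi
    have step : ∀ j ∈ Finset.range n,
        (if i < j ∧ min (j - i) (n - (j - i)) = r then f i + f j else 0)
        = (if j = i + r then f i + f (i + r) else 0)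
          + (if j = i + (n - r) then f i + f (i + (n - r)) else 0) := by
      intro j hj
      rw [Finset.mem_range] at hj
      by_cases h1 : j = i + r
      · subst h1
        rw [if_pos ⟨by omega, by omega⟩, if_pos rfl, if_neg (by omega), add_zero]
      · by_cases h2 : j = i + (n - r)
        · subst h2
          rw [if_pos ⟨by omega, by omega⟩, if_neg h1, if_pos rfl, zero_add]
        · rw [if_neg (by omega), if_neg h1, if_neg h2, add_zero]
    rw [Finset.sum_congr rfl step, Finset.sum_add_distrib,
      Finset.sum_ite_eq' (Finset.range n) (i+r) (fun _ => f i + f (i+r)),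
      Finset.sum_ite_eq' (Finset.range n) (i+(n-r)) (fun _ => f i + f (i+(n-r)))]
    simp only [Finset.mem_range]
  rw [Finset.sum_congr rfl inner, Finset.sum_add_distrib,
    ← Finset.sum_filter, ← Finset.sum_filter,
    show (Finset.range n).filter (fun i => i + r < n) = Finset.range (n - r) by
      ext x; simp [Finset.mem_filter]; omega,
    show (Finset.range n).filter (fun i => i + (n - r) < n) = Finset.range r by
      ext x; simp [Finset.mem_filter]; omega,
    Finset.sum_add_distrib, Finset.sum_add_distrib]
  have e1 : ∑ i ∈ Finset.range n, f i
      = ∑ i ∈ Finset.range (n - r), f i + ∑ i ∈ Finset.range r, f (i + (n - r)) := by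
    have h := Finset.sum_range_add f (n - r) r
    rw [show (n - r) + r = n by omega] at h
    rw [h]
    exact congrArg _ (Finset.sum_congr rfl fun x _ => by rw [Nat.add_comm])
  have e2 : ∑ i ∈ Finset.range n, f i
      = ∑ i ∈ Finset.range r, f i + ∑ i ∈ Finset.range (n - r), f (i + r) := by
    have h := Finset.sum_range_add f r (n - r)
    rw [show r + (n - r) = n by omega] at h
    rw [h]
    exact congrArg _ (Finset.sum_congr rfl fun x _ => by rw [Nat.add_comm])
  rw [two_mul]
  nth_rewrite 1 [e2]
  rw [e1]
  ring

lemma aux_poly (n : ℕ) (f : ℕ → ℚ) (hn : 3 ≤ n) (hodd : n % 2 = 1) :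
    ∑ i ∈ Finset.range n, ∑ j ∈ Finset.range n,
      (if i ≤ j then C (f i + f j) * X ^ (min (j - i) (n - (j - i))) else 0)
    = C (2 * ∑ i ∈ Finset.range n, f i) * ∑ r ∈ Finset.range ((n - 1) / 2 + 1), X ^ r := by
  set m := (n - 1) / 2 with hm
  have hd : ∀ i j : ℕ, i < n → j < n → min (j - i) (n - (j - i)) ∈ Finset.range (m + 1) := by
    intro i j hi hj; rw [Finset.mem_range, hm]; omega
  have step1 : ∀ i ∈ Finset.range n, ∀ j ∈ Finset.range n,
      (if i ≤ j then C (f i + f j) * X ^ (min (j - i) (n - (j - i))) else 0 : ℚ[X])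
      = ∑ r ∈ Finset.range (m + 1),
          (if i ≤ j ∧ min (j - i) (n - (j - i)) = r then C (f i + f j) * X ^ r else 0) := by
    intro i hi j hj
    rw [Finset.mem_range] at hi hj
    by_cases hij : i ≤ j
    · rw [if_pos hij]
      simp only [hij, true_and]
      rw [Finset.sum_ite_eq (Finset.range (m + 1)) (min (j - i) (n - (j - i)))
        (fun r => C (f i + f j) * X ^ r), if_pos (hd i j hi hj)]
    · rw [if_neg hij]
      exact (Finset.sum_eq_zero (fun r _ => by rw [if_neg (by tauto)])).symm
  rw [Finset.sum_congr rfl (fun i hi => Finset.sum_congr rfl (fun j hj => step1 i hi j hj))]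
  rw [Finset.sum_congr rfl (fun i _ => Finset.sum_comm), Finset.sum_comm, Finset.mul_sum]
  refine Finset.sum_congr rfl fun r hr => ?_
  rw [Finset.mem_range] at hr
  have push : ∀ i j : ℕ,
      (if i ≤ j ∧ min (j - i) (n - (j - i)) = r then C (f i + f j) * X ^ r else 0 : ℚ[X])
      = C (if i ≤ j ∧ min (j - i) (n - (j - i)) = r then f i + f j else 0) * X ^ r := by
    intro i j; split_ifs <;> simp
  simp only [push, ← Finset.sum_mul, ← map_sum]
  congr 1
  congr 1
  by_cases hr0 : r = 0
  · subst hr0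
    have inner : ∀ i ∈ Finset.range n, ∑ j ∈ Finset.range n,
        (if i ≤ j ∧ min (j - i) (n - (j - i)) = 0 then f i + f j else 0)
        = f i + f i := by
      intro i hi
      rw [Finset.mem_range] at hi
      have step : ∀ j ∈ Finset.range n,
          (if i ≤ j ∧ min (j - i) (n - (j - i)) = 0 then f i + f j else 0)
          = (if j = i then f i + f i else 0) := by
        intro j hj
        rw [Finset.mem_range] at hj
        by_cases h : j = i
        · subst h; rw [if_pos ⟨le_refl _, by omega⟩, if_pos rfl]
        · rw [if_neg (by omega), if_neg h]
      rw [Finset.sum_congr rfl step,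
        Finset.sum_ite_eq' (Finset.range n) i (fun _ => f i + f i),
        if_pos (Finset.mem_range.mpr hi)]
    rw [Finset.sum_congr rfl inner, Finset.sum_add_distrib]
    ring
  · have hcong : ∀ i ∈ Finset.range n, ∀ j ∈ Finset.range n,
        (if i ≤ j ∧ min (j - i) (n - (j - i)) = r then f i + f j else 0)
        = (if i < j ∧ min (j - i) (n - (j - i)) = r then f i + f j else 0) := by
      intro i hi j hj
      rw [Finset.mem_range] at hi hj
      by_cases h : i < j ∧ min (j - i) (n - (j - i)) = r
      · rw [if_pos ⟨le_of_lt h.1, h.2⟩, if_pos h]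
      · rw [if_neg (by omega), if_neg h]
    rw [Finset.sum_congr rfl (fun i hi => Finset.sum_congr rfl (fun j hj => hcong i hi j hj))]
    exact aux_layer n f r (by omega) (by omega)


/-- the odd cycle `C n` with labels 1 and 3 swapped in the
standard 3-colouring (`v_{i+1}` for `i < n - 1`: label 3 if `i` even, 2 if `i`
odd; `v_n` gets 1). Every distance layer contributes `5n - 3`, as does the
diagonal, and the chromatic Schultz polynomial is `(5n-3)·Σ x^i`. -/
theorem chromatic_schultz_cycle_odd_swapped (n : ℕ) (hn : 3 ≤ n) (hpar : Odd n) :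
    (∀ r, 1 ≤ r → r ≤ (n - 1) / 2 →
      (∑ i ∈ Finset.range n, ∑ j ∈ Finset.range n,
        if i < j ∧ min (j - i) (n - (j - i)) = r then
          ((if i = n - 1 then (1 : ℚ) else if i % 2 = 0 then 3 else 2) +
           (if j = n - 1 then (1 : ℚ) else if j % 2 = 0 then 3 else 2))
        else 0) = 5 * (n : ℚ) - 3) ∧
    (∑ i ∈ Finset.range n,
      2 * (if i = n - 1 then (1 : ℚ) else if i % 2 = 0 then 3 else 2)) = 5 * (n : ℚ) - 3 ∧
    (∑ i ∈ Finset.range n, ∑ j ∈ Finset.range n,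
      if i ≤ j then
        C ((if i = n - 1 then (1 : ℚ) else if i % 2 = 0 then 3 else 2) +
           (if j = n - 1 then (1 : ℚ) else if j % 2 = 0 then 3 else 2)) *
          X ^ (min (j - i) (n - (j - i)))
      else 0) =
    C (5 * (n : ℚ) - 3) * ∑ i ∈ Finset.range ((n - 1) / 2 + 1), X ^ i := by
  have hodd : n % 2 = 1 := Nat.odd_iff.mp hpar
  have hT := aux_T n hn hodd
  refine ⟨fun r hr1 hr2 => ?_, ?_, ?_⟩
  · have h := aux_layer n
      (fun i => if i = n - 1 then (1 : ℚ) else if i % 2 = 0 then 3 else 2) r hr1 (by omega)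
    beta_reduce at h
    rw [h, hT]; ring
  · rw [← Finset.mul_sum, hT]; ring
  · have h := aux_poly n
      (fun i => if i = n - 1 then (1 : ℚ) else if i % 2 = 0 then 3 else 2) hn hodd
    beta_reduce at h
    rw [hT, show (2 : ℚ) * ((5 * n - 3) / 2) = 5 * n - 3 by ring] at h
    exact h
end

section
/- Let n be even, n ≥ 2, and P_n the path with vertices v_1, …, v_n in order, coloured ζ(v_i) = 1 for i odd, ζ(v_i) = 2 for i even. Then the modified chromatic Schultz polynomial S*(P_n, x) = Σ_{{u,v}} ζ(u)ζ(v)x^{d(u,v)} (unordered pairs, diagonal contributing ζ(v)²) satisfies: the coefficient of x^r equals 2(n − r) for odd r with 1 ≤ r ≤ n−1, and equals 5(n − r)/2 for even r with 0 ≤ r ≤ n−2. -/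
open Polynomial Finset

private def wcol (i : ℕ) : ℚ := if i % 2 = 0 then 1 else 2

private lemma coeff_key (n r : ℕ) :
    ((∑ i ∈ Finset.range n, ∑ j ∈ Finset.range n,
        if i ≤ j then C (wcol i * wcol j) * X ^ (j - i) else 0).coeff r)
      = ∑ i ∈ Finset.range (n - r), wcol i * wcol (i + r) := by
  rw [Polynomial.finset_sum_coeff]
  have hinner : ∀ i, (∑ j ∈ Finset.range n,
      if i ≤ j then C (wcol i * wcol j) * X ^ (j - i) else 0).coeff r
      = if i + r < n then wcol i * wcol (i + r) else 0 := by
    intro i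
    rw [Polynomial.finset_sum_coeff]
    have : ∀ j ∈ Finset.range n,
        ((if i ≤ j then C (wcol i * wcol j) * X ^ (j - i) else 0).coeff r)
        = if j = i + r then wcol i * wcol (i + r) else 0 := by
      intro j _
      split_ifs with h1 h2 h2
      · subst h2
        simp [mul_assoc, Polynomial.coeff_C_mul, Polynomial.coeff_X_pow, Nat.add_sub_cancel_left]
      · rw [Polynomial.coeff_C_mul, Polynomial.coeff_X_pow, if_neg, mul_zero]
        omega
      · omega
      · simp
    rw [Finset.sum_congr rfl this, Finset.sum_ite_eq']
    simp [Finset.mem_range]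
  rw [Finset.sum_congr rfl (fun i _ => hinner i)]
  rw [← Finset.sum_subset (Finset.range_subset_range.2 (Nat.sub_le n r))]
  · exact Finset.sum_congr rfl (fun i hi => by
      rw [if_pos]; simp only [Finset.mem_range] at hi; omega)
  · intro i hi hni
    simp only [Finset.mem_range] at hi hni
    rw [if_neg]; omega

private lemma wsum_even_aux (k : ℕ) :
    ∑ i ∈ Finset.range (2 * k), (if i % 2 = 0 then (1 : ℚ) else 4) = 5 * k := by
  induction k with
  | zero => simp
  | succ k ih =>
    have h2 : 2 * (k + 1) = (2 * k + 1) + 1 := by ring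
    rw [h2, Finset.sum_range_succ, Finset.sum_range_succ, ih]
    have h3 : (2 * k) % 2 = 0 := by omega
    have h4 : (2 * k + 1) % 2 = 1 := by omega
    rw [h3, h4]
    push_cast
    ring

/-- coefficients of the modified chromatic Schultz polynomial of
the path `P n`, `n` even, with `ζ(v_{i+1}) = 1` iff `i` is even. -/
theorem modified_chromatic_schultz_path_even_coeff (n : ℕ) (hn : 2 ≤ n) (hpar : Even n) :
    (∀ r, Odd r → 1 ≤ r → r ≤ n - 1 →
      ((∑ i ∈ Finset.range n, ∑ j ∈ Finset.range n,
        if i ≤ j then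
          C ((if i % 2 = 0 then (1 : ℚ) else 2) * (if j % 2 = 0 then (1 : ℚ) else 2)) *
            X ^ (j - i)
        else 0).coeff r) = 2 * ((n : ℚ) - r)) ∧
    (∀ r, Even r → r ≤ n - 2 →
      ((∑ i ∈ Finset.range n, ∑ j ∈ Finset.range n,
        if i ≤ j then
          C ((if i % 2 = 0 then (1 : ℚ) else 2) * (if j % 2 = 0 then (1 : ℚ) else 2)) *
            X ^ (j - i)
        else 0).coeff r) = 5 * ((n : ℚ) - r) / 2) := by
  constructor
  · intro r hr h1 h2
    have := coeff_key n r
    simp only [wcol] at this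
    rw [this]
    have hterm : ∀ i ∈ Finset.range (n - r),
        (if i % 2 = 0 then (1 : ℚ) else 2) * (if (i + r) % 2 = 0 then (1 : ℚ) else 2) = 2 := by
      intro i _
      obtain ⟨m, hm⟩ := hr
      rcases Nat.even_or_odd i with ⟨a, ha⟩ | ⟨a, ha⟩
      · rw [if_pos (by omega), if_neg (by omega)]; ring
      · rw [if_neg (by omega), if_pos (by omega)]; ring
    rw [Finset.sum_congr rfl hterm, Finset.sum_const, Finset.card_range]
    have : ((n - r : ℕ) : ℚ) = (n : ℚ) - r := by
      have : r ≤ n := by omega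
      push_cast [this]; ring
    rw [nsmul_eq_mul, this]; ring
  · intro r hr h2
    have := coeff_key n r
    simp only [wcol] at this
    rw [this]
    have hterm : ∀ i ∈ Finset.range (n - r),
        (if i % 2 = 0 then (1 : ℚ) else 2) * (if (i + r) % 2 = 0 then (1 : ℚ) else 2)
        = (if i % 2 = 0 then (1 : ℚ) else 4) := by
      intro i _
      obtain ⟨m, hm⟩ := hr
      rcases Nat.even_or_odd i with ⟨a, ha⟩ | ⟨a, ha⟩
      · rw [if_pos (by omega), if_pos (by omega), if_pos (by omega)]; ring
      · rw [if_neg (by omega), if_neg (by omega), if_neg (by omega)]; ring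
    rw [Finset.sum_congr rfl hterm]
    obtain ⟨m, hm⟩ := hr
    obtain ⟨p, hp⟩ := hpar
    have hnr : n - r = 2 * (p - m) := by omega
    rw [hnr, wsum_even_aux]
    have hrn : r ≤ n := by omega
    have : ((p - m : ℕ) : ℚ) = ((n : ℚ) - r) / 2 := by
      have h5 : ((p - m : ℕ) : ℚ) = (p : ℚ) - m := by
        have : m ≤ p := by omega
        push_cast [this]; ring
      rw [h5]
      have hn' : (n : ℚ) = 2 * p := by exact_mod_cast congrArg Nat.cast (by omega : n = 2 * p)
      have hr' : (r : ℚ) = 2 * m := by exact_mod_cast congrArg Nat.cast (by omega : r = 2 * m)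
      rw [hn', hr']; ring
    rw [this]; ring
end

section
/- Let n be odd, n ≥ 1, and P_n the path with vertices v_1, …, v_n in order, coloured ζ(v_i) = 1 for i odd, ζ(v_i) = 2 for i even. Then the modified chromatic Schultz polynomial S*(P_n, x) = Σ_{{u,v}} ζ(u)ζ(v)x^{d(u,v)} (unordered pairs, diagonal contributing ζ(v)²) satisfies: the coefficient of x^r equals 2(n − r) for odd r with 1 ≤ r ≤ n−1, and equals (5(n−r) − 3)/2 for even r with 0 ≤ r ≤ n−1. -/
open Polynomial Finset

noncomputable def pathWeight (i : ℕ) : ℚ := if i % 2 = 0 then 1 else 2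

lemma pathCoeff_eq (n r : ℕ) (hr : r ≤ n) :
    ((∑ i ∈ Finset.range n, ∑ j ∈ Finset.range n,
      if i ≤ j then C (pathWeight i * pathWeight j) * X ^ (j - i) else 0).coeff r)
    = ∑ i ∈ Finset.range (n - r), pathWeight i * pathWeight (i + r) := by
  rw [Polynomial.finset_sum_coeff]
  simp only [Polynomial.finset_sum_coeff, apply_ite (fun p => Polynomial.coeff p r),
    coeff_C_mul, coeff_X_pow, coeff_zero, mul_ite, mul_one, mul_zero]
  have h1 : ∀ i j : ℕ, ((if i ≤ j then if r = j - i then pathWeight i * pathWeight j else 0 else 0)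
      = if j = i + r then pathWeight i * pathWeight (i + r) else 0) := by
    intro i j
    by_cases h : j = i + r
    · subst h; simp [Nat.le_add_right]
    · rcases le_or_gt i j with h2 | h2
      · simp only [h2, if_true, h, if_false]
        rw [if_neg]; omega
      · simp only [if_neg (not_le.mpr h2), h, if_false]
  simp only [h1, Finset.sum_ite_eq' (Finset.range n)]
  rw [show Finset.range (n - r) = (Finset.range n).filter (fun x => x + r ∈ Finset.range n) by
    ext x; simp only [Finset.mem_filter, Finset.mem_range]; omega, Finset.sum_filter]

/-- coefficients of the modified chromatic Schultz polynomial of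
the path `P n`, `n` odd, with `ζ(v_{i+1}) = 1` iff `i` is even. -/
theorem modified_chromatic_schultz_path_odd_coeff (n : ℕ) (hn : 1 ≤ n) (hpar : Odd n) :
    (∀ r, Odd r → 1 ≤ r → r ≤ n - 1 →
      ((∑ i ∈ Finset.range n, ∑ j ∈ Finset.range n,
        if i ≤ j then
          C ((if i % 2 = 0 then (1 : ℚ) else 2) * (if j % 2 = 0 then (1 : ℚ) else 2)) *
            X ^ (j - i)
        else 0).coeff r) = 2 * ((n : ℚ) - r)) ∧
    (∀ r, Even r → r ≤ n - 1 →
      ((∑ i ∈ Finset.range n, ∑ j ∈ Finset.range n,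
        if i ≤ j then
          C ((if i % 2 = 0 then (1 : ℚ) else 2) * (if j % 2 = 0 then (1 : ℚ) else 2)) *
            X ^ (j - i)
        else 0).coeff r) = (5 * ((n : ℚ) - r) - 3) / 2) := by
  constructor
  · intro r hodd hr1 hr2
    have hrn : r ≤ n := le_trans hr2 (Nat.sub_le n 1)
    rw [show (∑ i ∈ Finset.range n, ∑ j ∈ Finset.range n,
        if i ≤ j then
          C ((if i % 2 = 0 then (1 : ℚ) else 2) * (if j % 2 = 0 then (1 : ℚ) else 2)) *
            X ^ (j - i)
        else 0) = ∑ i ∈ Finset.range n, ∑ j ∈ Finset.range n,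
      if i ≤ j then C (pathWeight i * pathWeight j) * X ^ (j - i) else 0 from rfl,
      pathCoeff_eq n r hrn]
    have hr' : r % 2 = 1 := Nat.odd_iff.mp hodd
    have hval : ∀ i, pathWeight i * pathWeight (i + r) = 2 := by
      intro i
      unfold pathWeight
      rcases Nat.even_or_odd i with h | h
      · have h0 : i % 2 = 0 := Nat.even_iff.mp h
        have h1 : (i + r) % 2 ≠ 0 := by omega
        rw [if_pos h0, if_neg h1]; ring
      · have h0 : i % 2 ≠ 0 := by have := Nat.odd_iff.mp h; omega
        have h1 : (i + r) % 2 = 0 := by have := Nat.odd_iff.mp h; omega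
        rw [if_neg h0, if_pos h1]; ring
    simp only [hval, Finset.sum_const, Finset.card_range, nsmul_eq_mul]
    rw [Nat.cast_sub hrn]; ring
  · intro r heven hr2
    have hrn : r ≤ n := le_trans hr2 (Nat.sub_le n 1)
    rw [show (∑ i ∈ Finset.range n, ∑ j ∈ Finset.range n,
        if i ≤ j then
          C ((if i % 2 = 0 then (1 : ℚ) else 2) * (if j % 2 = 0 then (1 : ℚ) else 2)) *
            X ^ (j - i)
        else 0) = ∑ i ∈ Finset.range n, ∑ j ∈ Finset.range n,
      if i ≤ j then C (pathWeight i * pathWeight j) * X ^ (j - i) else 0 from rfl,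
      pathCoeff_eq n r hrn]
    have hr' : r % 2 = 0 := Nat.even_iff.mp heven
    have hval : ∀ i, pathWeight i * pathWeight (i + r) = 5/2 - 3/2 * (-1 : ℚ)^i := by
      intro i
      unfold pathWeight
      rcases Nat.even_or_odd i with h | h
      · have h0 : i % 2 = 0 := Nat.even_iff.mp h
        have h1 : (i + r) % 2 = 0 := by omega
        rw [if_pos h0, if_pos h1, h.neg_one_pow]; ring
      · have h0 : i % 2 ≠ 0 := by have := Nat.odd_iff.mp h; omega
        have h1 : (i + r) % 2 ≠ 0 := by have := Nat.odd_iff.mp h; omega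
        rw [if_neg h0, if_neg h1, h.neg_one_pow]; ring
    have hm : ¬ Even (n - r) := by
      rw [Nat.even_sub hrn]
      simp only [heven, iff_true]
      exact Nat.not_even_iff_odd.mpr hpar
    simp only [hval, Finset.sum_sub_distrib, Finset.sum_const, Finset.card_range,
      nsmul_eq_mul, ← Finset.mul_sum, neg_one_geom_sum, if_neg hm]
    rw [Nat.cast_sub hrn]; ring
end

section
/- Let n be odd, n ≥ 1, and P_n the path with vertices v_1, …, v_n, coloured with swapped labels ζ(v_i) = 2 for i odd, ζ(v_i) = 1 for i even. Then the modified chromatic Schultz polynomial S*(P_n, x) = Σ_{{u,v}} ζ(u)ζ(v)x^{d(u,v)} (unordered pairs, diagonal contributing ζ(v)²) has coefficient of x^r equal to 2(n−r) for odd r, 1 ≤ r ≤ n−1, and equal to (5(n−r) + 3)/2 for even r, 0 ≤ r ≤ n−1. -/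
open Polynomial Finset

private def ww (i : ℕ) : ℚ := if i % 2 = 0 then 2 else 1

private lemma coeff_lemma (n r : ℕ) :
    ((∑ i ∈ Finset.range n, ∑ j ∈ Finset.range n,
        if i ≤ j then C (ww i * ww j) * X ^ (j - i) else 0).coeff r)
    = ∑ i ∈ Finset.range (n - r), ww i * ww (i + r) := by
  rw [Polynomial.finset_sum_coeff]
  have step1 : ∀ i ∈ Finset.range n,
      ((∑ j ∈ Finset.range n,
        if i ≤ j then C (ww i * ww j) * X ^ (j - i) else 0).coeff r)
      = if i + r < n then ww i * ww (i + r) else 0 := by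
    intro i hi
    rw [Polynomial.finset_sum_coeff]
    have h1 : ∀ j ∈ Finset.range n,
        ((if i ≤ j then C (ww i * ww j) * X ^ (j - i) else 0).coeff r)
        = if j = i + r then ww i * ww (i + r) else 0 := by
      intro j hj
      by_cases h : i ≤ j
      · rw [if_pos h, Polynomial.coeff_C_mul, Polynomial.coeff_X_pow]
        by_cases h2 : j = i + r
        · subst h2
          simp
        · rw [if_neg (show ¬ r = j - i by omega), if_neg h2, mul_zero]
      · have h2 : j ≠ i + r := by omega
        simp [h, h2]
    rw [Finset.sum_congr rfl h1, Finset.sum_ite_eq' (Finset.range n)]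
    simp [Finset.mem_range]
  rw [Finset.sum_congr rfl step1]
  rw [← Finset.sum_subset (Finset.range_subset_range.mpr (Nat.sub_le n r))]
  · refine Finset.sum_congr rfl fun i hi => ?_
    rw [Finset.mem_range] at hi
    rw [if_pos (by omega)]
  · intro x hx hx'
    rw [Finset.mem_range] at hx
    rw [Finset.mem_range] at hx'
    rw [if_neg (by omega)]

private lemma sum_alt (k : ℕ) :
    ∑ i ∈ Finset.range (2 * k + 1), (if i % 2 = 0 then (4 : ℚ) else 1)
      = 5 * k + 4 := by
  induction k with
  | zero => simp
  | succ k ih =>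
    have h : 2 * (k + 1) + 1 = (2 * k + 1) + 1 + 1 := by ring
    rw [h, Finset.sum_range_succ, Finset.sum_range_succ, ih]
    have h1 : (2 * k + 1) % 2 = 1 := by omega
    have h2 : (2 * k + 1 + 1) % 2 = 0 := by omega
    rw [h1, h2]
    push_cast
    ring

/-- coefficients of the modified chromatic Schultz polynomial of
the path `P n`, `n` odd, with the swapped colouring `ζ(v_{i+1}) = 2` iff `i`
is even. -/
theorem modified_chromatic_schultz_path_odd_swapped_coeff (n : ℕ) (hn : 1 ≤ n) (hpar : Odd n) :
    (∀ r, Odd r → 1 ≤ r → r ≤ n - 1 →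
      ((∑ i ∈ Finset.range n, ∑ j ∈ Finset.range n,
        if i ≤ j then
          C ((if i % 2 = 0 then (2 : ℚ) else 1) * (if j % 2 = 0 then (2 : ℚ) else 1)) *
            X ^ (j - i)
        else 0).coeff r) = 2 * ((n : ℚ) - r)) ∧
    (∀ r, Even r → r ≤ n - 1 →
      ((∑ i ∈ Finset.range n, ∑ j ∈ Finset.range n,
        if i ≤ j then
          C ((if i % 2 = 0 then (2 : ℚ) else 1) * (if j % 2 = 0 then (2 : ℚ) else 1)) *
            X ^ (j - i)
        else 0).coeff r) = (5 * ((n : ℚ) - r) + 3) / 2) := by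
  constructor
  · intro r hr h1 h2
    have hrn : r ≤ n := by omega
    rw [show (∑ i ∈ Finset.range n, ∑ j ∈ Finset.range n,
        if i ≤ j then
          C ((if i % 2 = 0 then (2 : ℚ) else 1) * (if j % 2 = 0 then (2 : ℚ) else 1)) *
            X ^ (j - i)
        else 0) = (∑ i ∈ Finset.range n, ∑ j ∈ Finset.range n,
        if i ≤ j then C (ww i * ww j) * X ^ (j - i) else 0) from rfl, coeff_lemma]
    have hval : ∀ i ∈ Finset.range (n - r), ww i * ww (i + r) = 2 := by
      intro i _
      obtain ⟨m, hm⟩ := hr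
      by_cases h : i % 2 = 0
      · have h' : (i + r) % 2 = 1 := by omega
        simp [ww, h, h']
      · have h' : (i + r) % 2 = 0 := by omega
        simp [ww, h, h']
    rw [Finset.sum_congr rfl hval, Finset.sum_const, Finset.card_range]
    have : ((n - r : ℕ) : ℚ) = (n : ℚ) - r := by
      push_cast [Nat.cast_sub hrn]; ring
    rw [nsmul_eq_mul, this]
    ring
  · intro r hr h2
    have hrn : r ≤ n := by omega
    rw [show (∑ i ∈ Finset.range n, ∑ j ∈ Finset.range n,
        if i ≤ j then
          C ((if i % 2 = 0 then (2 : ℚ) else 1) * (if j % 2 = 0 then (2 : ℚ) else 1)) *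
            X ^ (j - i)
        else 0) = (∑ i ∈ Finset.range n, ∑ j ∈ Finset.range n,
        if i ≤ j then C (ww i * ww j) * X ^ (j - i) else 0) from rfl, coeff_lemma]
    have hval : ∀ i ∈ Finset.range (n - r),
        ww i * ww (i + r) = (if i % 2 = 0 then (4 : ℚ) else 1) := by
      intro i _
      obtain ⟨m, hm⟩ := hr
      by_cases h : i % 2 = 0
      · have h' : (i + r) % 2 = 0 := by omega
        simp [ww, h, h']
        norm_num
      · have h' : (i + r) % 2 = 1 := by omega
        simp [ww, h, h']
    rw [Finset.sum_congr rfl hval]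
    obtain ⟨m, hm⟩ := hpar
    obtain ⟨s, hs⟩ := hr
    have hk : ∃ k, n - r = 2 * k + 1 := ⟨m - s, by omega⟩
    obtain ⟨k, hk⟩ := hk
    rw [hk, sum_alt]
    have hnr : (n : ℚ) - r = 2 * k + 1 := by
      have : n = r + (2 * k + 1) := by omega
      subst this
      push_cast
      ring
    rw [hnr]
    ring
end
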